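/- Let R ≻ 0 and Q ⪰ 0, let (A★,B★) and (Â,B̂) be arbitrary pairs in ℝ^{n×n} × ℝ^{n×m}, and let P₁, P₂ ⪰ 0. Then the one-step identity holds: 𝓡_{Â,B̂}(P₁) − 𝓡_{A★,B★}(P₂) = [𝓛_{Â,B̂}(P₁)]ᵀ (P₁ − P₂) 𝓛̄(P₂) + 𝓜(P₁, P₂). -/

import Mathlib

open Matrix

/-- Spectral norm (operator 2-norm) of a real matrix. -/
noncomputable def spNorm {p q : ℕ} (M : Matrix (Fin p) (Fin q) ℝ) : ℝ :=
  ‖LinearMap.toContinuousLinearMap (Matrix.toEuclideanLin M)‖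

/-- The spectral radius of a real square matrix is `< 1`. -/
def StabMat {n : ℕ} (M : Matrix (Fin n) (Fin n) ℝ) : Prop :=
  ∀ μ ∈ spectrum ℂ (M.map (algebraMap ℝ ℂ)), ‖μ‖ < 1

/-- `(A, B)` is stabilizable. -/
def Stabilizable {n m : ℕ} (A : Matrix (Fin n) (Fin n) ℝ)
    (B : Matrix (Fin n) (Fin m) ℝ) : Prop :=
  ∃ K : Matrix (Fin m) (Fin n) ℝ, StabMat (A - B * K)

/-- Smallest (real) eigenvalue: `σ_min` for symmetric matrices. -/
noncomputable def minEig {k : ℕ} (M : Matrix (Fin k) (Fin k) ℝ) : ℝ :=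
  sInf (spectrum ℝ M)

/-- Largest (real) eigenvalue: `σ_max` for symmetric matrices. -/
noncomputable def maxEig {k : ℕ} (M : Matrix (Fin k) (Fin k) ℝ) : ℝ :=
  sSup (spectrum ℝ M)

/-- `S_B = B R⁻¹ Bᵀ`. -/
noncomputable def sMat {n m : ℕ} (R : Matrix (Fin m) (Fin m) ℝ)
    (B : Matrix (Fin n) (Fin m) ℝ) : Matrix (Fin n) (Fin n) ℝ :=
  B * R⁻¹ * Bᵀ

/-- Riccati map `𝓡_{A,B}(P) = Aᵀ P (I + S_B P)⁻¹ A + Q`. -/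
noncomputable def ric {n m : ℕ} (R : Matrix (Fin m) (Fin m) ℝ)
    (Q A : Matrix (Fin n) (Fin n) ℝ) (B : Matrix (Fin n) (Fin m) ℝ)
    (P : Matrix (Fin n) (Fin n) ℝ) : Matrix (Fin n) (Fin n) ℝ :=
  Aᵀ * P * (1 + sMat R B * P)⁻¹ * A + Q

/-- Riccati iterates: `𝓡^{(0)} = id`, `𝓡^{(i+1)} = 𝓡 ∘ 𝓡^{(i)}`. -/
noncomputable def ricIter {n m : ℕ} (R : Matrix (Fin m) (Fin m) ℝ)
    (Q A : Matrix (Fin n) (Fin n) ℝ) (B : Matrix (Fin n) (Fin m) ℝ) :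
    ℕ → Matrix (Fin n) (Fin n) ℝ → Matrix (Fin n) (Fin n) ℝ
  | 0, P => P
  | i + 1, P => ric R Q A B (ricIter R Q A B i P)

/-- Gain `𝓚_{A,B}(P) = (R + Bᵀ P B)⁻¹ Bᵀ P A`. -/
noncomputable def gain {n m : ℕ} (R : Matrix (Fin m) (Fin m) ℝ)
    (A : Matrix (Fin n) (Fin n) ℝ) (B : Matrix (Fin n) (Fin m) ℝ)
    (P : Matrix (Fin n) (Fin n) ℝ) : Matrix (Fin m) (Fin n) ℝ :=
  (R + Bᵀ * P * B)⁻¹ * (Bᵀ * P * A)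

/-- Closed loop matrix `𝓛_{A,B}(P) = (I + S_B P)⁻¹ A`. -/
noncomputable def clMat {n m : ℕ} (R : Matrix (Fin m) (Fin m) ℝ)
    (A : Matrix (Fin n) (Fin n) ℝ) (B : Matrix (Fin n) (Fin m) ℝ)
    (P : Matrix (Fin n) (Fin n) ℝ) : Matrix (Fin n) (Fin n) ℝ :=
  (1 + sMat R B * P)⁻¹ * A

/-- State transition matrix `Φ^{(j:i)}_{A,B}(P)`. -/
noncomputable def phiMat {n m : ℕ} (R : Matrix (Fin m) (Fin m) ℝ)
    (Q A : Matrix (Fin n) (Fin n) ℝ) (B : Matrix (Fin n) (Fin m) ℝ)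
    (P : Matrix (Fin n) (Fin n) ℝ) (j i : ℕ) : Matrix (Fin n) (Fin n) ℝ :=
  ((List.range (i - j)).map (fun k => clMat R A B (ricIter R Q A B (j + k) P))).prod

/-- Perturbed closed loop matrix `𝓛̄(P) = W(P)(H(P) + 𝓛_{A★,B★}(P))`. -/
noncomputable def lbarMat {n m : ℕ} (R : Matrix (Fin m) (Fin m) ℝ)
    (As : Matrix (Fin n) (Fin n) ℝ) (Bs : Matrix (Fin n) (Fin m) ℝ)
    (Ah : Matrix (Fin n) (Fin n) ℝ) (Bh : Matrix (Fin n) (Fin m) ℝ)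
    (P : Matrix (Fin n) (Fin n) ℝ) : Matrix (Fin n) (Fin n) ℝ :=
  (1 + (sMat R Bs - sMat R Bh) * P) *
    ((1 + sMat R Bs * P)⁻¹ * (Ah - As) + clMat R As Bs P)

/-- Perturbed state transition matrix `Φ̄^{(j:i)}(P)`. -/
noncomputable def phibarMat {n m : ℕ} (R : Matrix (Fin m) (Fin m) ℝ)
    (Q As : Matrix (Fin n) (Fin n) ℝ) (Bs : Matrix (Fin n) (Fin m) ℝ)
    (Ah : Matrix (Fin n) (Fin n) ℝ) (Bh : Matrix (Fin n) (Fin m) ℝ)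
    (P : Matrix (Fin n) (Fin n) ℝ) (j i : ℕ) : Matrix (Fin n) (Fin n) ℝ :=
  ((List.range (i - j)).map
    (fun k => lbarMat R As Bs Ah Bh (ricIter R Q As Bs (j + k) P))).prod

/-- The map `𝓜(P₁,P₂)`. -/
noncomputable def mMat {n m : ℕ} (R : Matrix (Fin m) (Fin m) ℝ)
    (As : Matrix (Fin n) (Fin n) ℝ) (Bs : Matrix (Fin n) (Fin m) ℝ)
    (Ah : Matrix (Fin n) (Fin n) ℝ) (Bh : Matrix (Fin n) (Fin m) ℝ)
    (P1 P2 : Matrix (Fin n) (Fin n) ℝ) : Matrix (Fin n) (Fin n) ℝ :=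
  Ahᵀ * P2 * (1 + sMat R Bs * P2)⁻¹ * Ah - Asᵀ * P2 * (1 + sMat R Bs * P2)⁻¹ * As
    + Ahᵀ * (1 + P1 * sMat R Bh)⁻¹ * P2 * (sMat R Bs - sMat R Bh) * P2 *
        (1 + sMat R Bs * P2)⁻¹ * Ah

/-- `β★ = σ_max(P★)/σ_min(Q)`. -/
noncomputable def betaStar {n : ℕ} (Q Pstar : Matrix (Fin n) (Fin n) ℝ) : ℝ :=
  maxEig Pstar / minEig Q

/-- `ψ(ε_m, ε_p)`. -/
noncomputable def psiF (U b em ep : ℝ) : ℝ :=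
  em * (1 + (em + 2 * U) ^ 2 * (b * ep + U))

/-- `γ₁(ε_m, ε_p)`. -/
noncomputable def gamma1F (U b em ep : ℝ) : ℝ :=
  Real.sqrt b * psiF U b em ep + Real.sqrt (1 - b⁻¹)

/-- `α_{ε_m} = (1 − 8‖P★‖² ε_m)^{−1/2}`, with `p = ‖P★‖`. -/
noncomputable def alphaF (p em : ℝ) : ℝ :=
  (1 - 8 * p ^ 2 * em) ^ (-(1 / 2) : ℝ)

/-- `γ₂(ε_m)`. -/
noncomputable def gamma2F (p b em : ℝ) : ℝ :=
  Real.sqrt (1 - (alphaF p em)⁻¹ * b⁻¹)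

/-- `ψ̃(ε_m)`. -/
noncomputable def psitF (U em : ℝ) : ℝ :=
  (em ^ 2 + 2 * U * em) * (U + (em + U) ^ 2 * U ^ 2)

/-- `Ê(ε_m, ε_p, i)`. -/
noncomputable def ehatF (p U b em ep : ℝ) (i : ℕ) : ℝ :=
  Real.sqrt (alphaF p em) * b *
    ((gamma1F U b em ep * gamma2F p b em) ^ i * ep +
      psitF U em * ((1 - (gamma1F U b em ep * gamma2F p b em) ^ i) /
        (1 - gamma1F U b em ep * gamma2F p b em)))

/-- `g(N, ε_m, ε_p)` with `r = σ_max(R)`, `p = ‖P★‖`, `b = β★`. -/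
noncomputable def gF (m : ℕ) (σw r U p b em ep : ℝ) (N : ℕ) : ℝ :=
  128 * (m : ℝ) * σw ^ 2 * (r + U ^ 3) * U ^ 4 * p ^ 2 *
    (em + ehatF p U b em ep (N - 1)) ^ 2

/-- The Lyapunov equation `Σ = (A−BK) Σ (A−BK)ᵀ + σ_w² I`. -/
def LyapEq {n m : ℕ} (As : Matrix (Fin n) (Fin n) ℝ) (Bs : Matrix (Fin n) (Fin m) ℝ)
    (K : Matrix (Fin m) (Fin n) ℝ) (σw : ℝ) (S : Matrix (Fin n) (Fin n) ℝ) : Prop :=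
  S = (As - Bs * K) * S * (As - Bs * K)ᵀ + σw ^ 2 • (1 : Matrix (Fin n) (Fin n) ℝ)

/-- `J_K = tr((Q + Kᵀ R K) Σ)`. -/
noncomputable def lqCost {n m : ℕ} (R : Matrix (Fin m) (Fin m) ℝ)
    (Q : Matrix (Fin n) (Fin n) ℝ) (K : Matrix (Fin m) (Fin n) ℝ)
    (S : Matrix (Fin n) (Fin n) ℝ) : ℝ :=
  ((Q + Kᵀ * R * K) * S).trace

/-! Pushing `P₁` through the resolvent, `P₁ (I + S_{B̂} P₁)⁻¹ = (I + P₁ S_{B̂})⁻¹ P₁`, turns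
`𝓡_{Â,B̂}(P₁)` into `Âᵀ (I + P₁ S_{B̂})⁻¹ P₁ Â + Q`, whose left factor `Âᵀ (I + P₁ S_{B̂})⁻¹` is
`𝓛_{Â,B̂}(P₁)ᵀ`. Writing `P₁ = (P₁ − P₂) + P₂` and clearing `(I + S_{B★} P₂)` against
`(I + P₁ S_{B̂})` leaves a noncommutative polynomial identity. All inverses exist because
`det (I + S P) > 0` for positive semidefinite `S`, `P`: it equals `det (I + √S P √S)`. -/

section Resolvent

variable {ι K : Type*} [Fintype ι] [DecidableEq ι] [CommRing K]

theorem Matrix.mul_inv_one_add_mul {S P : Matrix ι ι K} (h : IsUnit (1 + S * P).det) :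
    P * (1 + S * P)⁻¹ = (1 + P * S)⁻¹ * P := by
  have h' : IsUnit (1 + P * S).det := by rwa [det_one_add_mul_comm]
  calc P * (1 + S * P)⁻¹
      = (1 + P * S)⁻¹ * ((1 + P * S) * P) * (1 + S * P)⁻¹ := by
        rw [nonsing_inv_mul_cancel_left _ _ h']
    _ = (1 + P * S)⁻¹ * P * ((1 + S * P) * (1 + S * P)⁻¹) := by noncomm_ring
    _ = (1 + P * S)⁻¹ * P := by rw [mul_nonsing_inv _ h, Matrix.mul_one]

theorem Matrix.inv_one_add_mul_mul_eq {S₁ S₂ P₁ P₂ : Matrix ι ι K}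
    (h₁ : IsUnit (1 + P₁ * S₁).det) (h₂ : IsUnit (1 + S₂ * P₂).det) :
    (1 + P₁ * S₁)⁻¹ * P₁ =
      (1 + P₁ * S₁)⁻¹ * ((P₁ - P₂) * (1 + (S₂ - S₁) * P₂) + P₂ * (S₂ - S₁) * P₂) *
          (1 + S₂ * P₂)⁻¹ + P₂ * (1 + S₂ * P₂)⁻¹ := by
  have hsplit : P₁ * (1 + S₂ * P₂) =
      (P₁ - P₂) * (1 + (S₂ - S₁) * P₂) + P₂ * (S₂ - S₁) * P₂ + (1 + P₁ * S₁) * P₂ := by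
    noncomm_ring
  calc (1 + P₁ * S₁)⁻¹ * P₁
      = (1 + P₁ * S₁)⁻¹ * (P₁ * (1 + S₂ * P₂)) * (1 + S₂ * P₂)⁻¹ := by
        rw [Matrix.mul_assoc _ (P₁ * _), Matrix.mul_assoc P₁, mul_nonsing_inv _ h₂,
          Matrix.mul_one]
    _ = _ := by
        rw [hsplit, Matrix.mul_add, nonsing_inv_mul_cancel_left _ _ h₁, Matrix.add_mul]

end Resolvent

open scoped MatrixOrder in
theorem Matrix.PosSemidef.isUnit_det_one_add_mul {ι : Type*} [Fintype ι] [DecidableEq ι]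
    {S P : Matrix ι ι ℝ} (hS : S.PosSemidef) (hP : P.PosSemidef) :
    IsUnit (1 + S * P).det := by
  set C := CFC.sqrt S
  have hCC : C * C = S := CFC.sqrt_mul_sqrt_self S hS.nonneg
  have hC : Cᵀ = C := (isHermitian_iff_isSymm.mp (CFC.sqrt_nonneg S).posSemidef.isHermitian).eq
  have hCPC : (C * P * C).PosSemidef := by
    simpa [conjTranspose_eq_transpose_of_trivial, hC] using hP.mul_mul_conjTranspose_same C
  have hdet : (1 + S * P).det = (1 + C * P * C).det := by
    rw [← hCC, Matrix.mul_assoc, det_one_add_mul_comm, Matrix.mul_assoc]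
  rw [hdet]
  exact (PosDef.one.add_posSemidef hCPC).det_pos.ne'.isUnit

section Riccati

variable {n m : ℕ} {R : Matrix (Fin m) (Fin m) ℝ}

theorem sMat_posSemidef (hR : R.PosDef) (B : Matrix (Fin n) (Fin m) ℝ) :
    (sMat R B).PosSemidef := by
  simpa [sMat, conjTranspose_eq_transpose_of_trivial] using
    (posDef_inv_iff.mpr hR).posSemidef.mul_mul_conjTranspose_same B

theorem transpose_clMat (hR : R.PosDef) (A : Matrix (Fin n) (Fin n) ℝ)
    (B : Matrix (Fin n) (Fin m) ℝ) {P : Matrix (Fin n) (Fin n) ℝ} (hP : P.IsSymm) :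
    (clMat R A B P)ᵀ = Aᵀ * (1 + P * sMat R B)⁻¹ := by
  have hS : (sMat R B)ᵀ = sMat R B :=
    (isHermitian_iff_isSymm.mp (sMat_posSemidef hR B).isHermitian).eq
  rw [clMat, transpose_mul, transpose_nonsing_inv, transpose_add, transpose_one, transpose_mul,
    hS, hP.eq]

theorem ric_eq_inv_one_add_mul_mul (hR : R.PosDef) (Q A : Matrix (Fin n) (Fin n) ℝ)
    (B : Matrix (Fin n) (Fin m) ℝ) {P : Matrix (Fin n) (Fin n) ℝ} (hP : P.PosSemidef) :
    ric R Q A B P = Aᵀ * ((1 + P * sMat R B)⁻¹ * P) * A + Q := by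
  rw [ric, Matrix.mul_assoc Aᵀ P,
    mul_inv_one_add_mul ((sMat_posSemidef hR B).isUnit_det_one_add_mul hP)]

end Riccati

theorem stmt7_general {n m : ℕ}
    (Astar Ahat : Matrix (Fin n) (Fin n) ℝ) (Bstar Bhat : Matrix (Fin n) (Fin m) ℝ)
    (R : Matrix (Fin m) (Fin m) ℝ) (Q P1 P2 : Matrix (Fin n) (Fin n) ℝ)
    (hR : R.PosDef)
    (hP1 : P1.PosSemidef) (hP2 : P2.PosSemidef) :
    ric R Q Ahat Bhat P1 - ric R Q Astar Bstar P2 =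
      (clMat R Ahat Bhat P1)ᵀ * (P1 - P2) * lbarMat R Astar Bstar Ahat Bhat P2 +
        mMat R Astar Bstar Ahat Bhat P1 P2 := by
  have h₁ : IsUnit (1 + P1 * sMat R Bhat).det := by
    rw [det_one_add_mul_comm]
    exact (sMat_posSemidef hR Bhat).isUnit_det_one_add_mul hP1
  have h₂ := (sMat_posSemidef hR Bstar).isUnit_det_one_add_mul hP2
  rw [ric_eq_inv_one_add_mul_mul hR _ _ _ hP1, inv_one_add_mul_mul_eq h₁ h₂,
    transpose_clMat hR _ _ (isHermitian_iff_isSymm.mp hP1.isHermitian)]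
  simp only [ric, lbarMat, mMat, clMat]
  noncomm_ring

theorem stmt7 {n m : ℕ} (hn : 0 < n) (hm : 0 < m)
    (Astar Ahat : Matrix (Fin n) (Fin n) ℝ) (Bstar Bhat : Matrix (Fin n) (Fin m) ℝ)
    (R : Matrix (Fin m) (Fin m) ℝ) (Q P1 P2 : Matrix (Fin n) (Fin n) ℝ)
    (hR : R.PosDef) (hQ : Q.PosSemidef)
    (hP1 : P1.PosSemidef) (hP2 : P2.PosSemidef) :
    ric R Q Ahat Bhat P1 - ric R Q Astar Bstar P2 =
      (clMat R Ahat Bhat P1)ᵀ * (P1 - P2) * lbarMat R Astar Bstar Ahat Bhat P2 +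
        mMat R Astar Bstar Ahat Bhat P1 P2 :=
  stmt7_general Astar Ahat Bstar Bhat R Q P1 P2 hR hP1 hP2
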